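/- eval_need is well-defined as a function: by-need standard reduction is deterministic, i.e., if E1[M1] = E2[M2] where M1, M2 are by-need redexes (deref, assoc-L, or assoc-R) and E1, E2 are evaluation contexts, then E1 = E2 and M1 = M2 (unique decomposition). -/
import Mathlib


inductive Tm : Type
  | var : Nat → Tm
  | lam : Tm → Tm
  | app : Tm → Tm → Tm
deriving DecidableEq

/-- shift ↑(M, x, m): increment all indices ≥ m by x -/
def shift : Tm → Nat → Nat → Tm
  | .var n, x, m => if n ≥ m then .var (n + x) else .var n
  | .lam M, x, m => .lam (shift M x (m+1))
  | .app M N, x, m => .app (shift M x m) (shift N x m)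

/-- apply a renaming environment R to a term: (R)n = n + R(n) -/
def ren : List Nat → Tm → Tm
  | R, .var n => .var (n + R.getD n 0)
  | R, .lam M => .lam (ren (0 :: R) M)
  | R, .app M N => .app (ren R M) (ren R N)

/-- values are lambda abstractions -/
def IsVal (M : Tm) : Prop := ∃ M', M = Tm.lam M'

/-- Evaluation contexts E ::= [] | E M | (λ.E) M | (λ.E'[n]) E with n = Δ(E') -/
inductive ECtx : Type
  | hole : ECtx
  | appL : ECtx → Tm → ECtx
  | bind : ECtx → Tm → ECtx
  | opC  : ECtx → ECtx → ECtx

/-- Δ : E → ℕ -/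
def delta : ECtx → Nat
  | .hole => 0
  | .appL E _ => delta E
  | .bind E _ => delta E + 1
  | .opC _ E => delta E

/-- plugging E[M]; in the opC case the bound variable is Δ(E') -/
def plugE : ECtx → Tm → Tm
  | .hole, M => M
  | .appL E N, M => .app (plugE E M) N
  | .bind E N, M => .app (.lam (plugE E M)) N
  | .opC E' E, M => .app (.lam (plugE E' (.var (delta E')))) (plugE E M)

/-- Answer contexts A ::= [] | (λ.A) M -/
inductive ACtx : Type
  | hole : ACtx
  | bind : ACtx → Tm → ACtx
deriving DecidableEq

def plugA : ACtx → Tm → Tm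
  | .hole, M => M
  | .bind A N, M => .app (.lam (plugA A M)) N

/-- by-need redexes: deref, assoc-L, assoc-R -/
inductive IsRedex : Tm → Prop
  | deref : ∀ (E : ECtx) (n : Nat) (V : Tm), IsVal V → delta E = n →
      IsRedex (.app (.lam (plugE E (.var n))) V)
  | assocL : ∀ (A : ACtx) (V M N : Tm), IsVal V →
      IsRedex (.app (.app (.lam (plugA A V)) M) N)
  | assocR : ∀ (E : ECtx) (n : Nat) (A : ACtx) (V M : Tm), IsVal V → delta E = n →
      IsRedex (.app (.lam (plugE E (.var n))) (.app (.lam (plugA A V)) M))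


/-! ### Auxiliary lemmas for unique decomposition -/

lemma plug_eq_lam {E : ECtx} {M X : Tm} (h : plugE E M = Tm.lam X) :
    E = ECtx.hole ∧ M = Tm.lam X := by
  cases E with
  | hole => exact ⟨rfl, h⟩
  | appL E N => simp [plugE] at h
  | bind E N => simp [plugE] at h
  | opC E' E => simp [plugE] at h

lemma redex_app {M : Tm} (h : IsRedex M) : ∃ P Q, M = Tm.app P Q := by
  cases h <;> exact ⟨_, _, rfl⟩

lemma redex_ne_lam {E : ECtx} {M X : Tm} (hM : IsRedex M) : plugE E M ≠ Tm.lam X := by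
  intro h
  obtain ⟨rfl, h2⟩ := plug_eq_lam h
  obtain ⟨P, Q, hPQ⟩ := redex_app hM
  rw [hPQ] at h2; cases h2

/-- an answer never equals a demanded-variable decomposition -/
lemma ans_ne_var {V : Tm} (hV : IsVal V) :
    ∀ (E : ECtx) (A : ACtx) (n : Nat), plugA A V ≠ plugE E (Tm.var n) := by
  intro E
  induction E with
  | hole =>
      intro A n h
      obtain ⟨W, rfl⟩ := hV
      cases A <;> simp [plugA, plugE] at h
  | appL E N ih =>
      intro A n h
      cases A with
      | hole => obtain ⟨W, rfl⟩ := hV; simp [plugA, plugE] at h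
      | bind A' N' =>
          simp only [plugA, plugE] at h
          obtain ⟨h1, -⟩ := Tm.app.inj h
          obtain ⟨-, h3⟩ := plug_eq_lam h1.symm
          cases h3
  | bind E N ih =>
      intro A n h
      cases A with
      | hole => obtain ⟨W, rfl⟩ := hV; simp [plugA, plugE] at h
      | bind A' N' =>
          simp only [plugA, plugE] at h
          obtain ⟨h1, -⟩ := Tm.app.inj h
          exact ih A' n (Tm.lam.inj h1)
  | opC E' E ihl ihr =>
      intro A n h
      cases A with
      | hole => obtain ⟨W, rfl⟩ := hV; simp [plugA, plugE] at h
      | bind A' N' =>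
          simp only [plugA, plugE] at h
          obtain ⟨h1, -⟩ := Tm.app.inj h
          exact ihl A' (delta E') (Tm.lam.inj h1)

/-- unique decomposition for demanded variables -/
lemma var_decomp_unique :
    ∀ (E E' : ECtx) (n n' : Nat), n ≥ delta E → n' ≥ delta E' →
      plugE E (Tm.var n) = plugE E' (Tm.var n') → E = E' ∧ n = n' := by
  intro E
  induction E with
  | hole =>
      intro E' n n' _ _ h
      cases E' with
      | hole => exact ⟨rfl, Tm.var.inj h⟩
      | appL E N => simp [plugE] at h
      | bind E N => simp [plugE] at h
      | opC E1 E2 => simp [plugE] at h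
  | appL E N ih =>
      intro E' n n' hn hn' h
      cases E' with
      | hole => simp [plugE] at h
      | appL Ea Na =>
          simp only [plugE] at h
          obtain ⟨h1, h2⟩ := Tm.app.inj h
          obtain ⟨hE, hnn⟩ := ih Ea n n' hn hn' h1
          exact ⟨by rw [hE, h2], hnn⟩
      | bind Ea Na =>
          simp only [plugE] at h
          obtain ⟨h1, -⟩ := Tm.app.inj h
          obtain ⟨-, h3⟩ := plug_eq_lam h1
          cases h3
      | opC Ea Eb =>
          simp only [plugE] at h
          obtain ⟨h1, -⟩ := Tm.app.inj h
          obtain ⟨-, h3⟩ := plug_eq_lam h1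
          cases h3
  | bind E N ih =>
      intro E' n n' hn hn' h
      cases E' with
      | hole => simp [plugE] at h
      | appL Ea Na =>
          simp only [plugE] at h
          obtain ⟨h1, -⟩ := Tm.app.inj h
          obtain ⟨-, h3⟩ := plug_eq_lam h1.symm
          cases h3
      | bind Ea Na =>
          simp only [plugE] at h
          obtain ⟨h1, h2⟩ := Tm.app.inj h
          have hn2 : n ≥ delta E := by simp [delta] at hn; omega
          have hn'2 : n' ≥ delta Ea := by simp [delta] at hn'; omega
          obtain ⟨hE, hnn⟩ := ih Ea n n' hn2 hn'2 (Tm.lam.inj h1)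
          exact ⟨by rw [hE, h2], hnn⟩
      | opC Ea Eb =>
          simp only [plugE] at h
          obtain ⟨h1, -⟩ := Tm.app.inj h
          have hn2 : n ≥ delta E := by simp [delta] at hn; omega
          obtain ⟨hE, hnn⟩ := ih Ea n (delta Ea) hn2 (le_refl _) (Tm.lam.inj h1)
          subst hE
          simp [delta] at hn
          omega
  | opC E1 E2 ih1 ih2 =>
      intro E' n n' hn hn' h
      cases E' with
      | hole => simp [plugE] at h
      | appL Ea Na =>
          simp only [plugE] at h
          obtain ⟨h1, -⟩ := Tm.app.inj h
          obtain ⟨-, h3⟩ := plug_eq_lam h1.symm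
          cases h3
      | bind Ea Na =>
          simp only [plugE] at h
          obtain ⟨h1, -⟩ := Tm.app.inj h
          have hn'2 : n' ≥ delta Ea := by simp [delta] at hn'; omega
          obtain ⟨hE, hnn⟩ := ih1 Ea (delta E1) n' (le_refl _) hn'2 (Tm.lam.inj h1)
          subst hE
          simp [delta] at hn'
          omega
      | opC Ea Eb =>
          simp only [plugE] at h
          obtain ⟨h1, h2⟩ := Tm.app.inj h
          obtain ⟨hE1, -⟩ := ih1 Ea (delta E1) (delta Ea) (le_refl _) (le_refl _) (Tm.lam.inj h1)
          have hn2 : n ≥ delta E2 := by simpa [delta] using hn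
          have hn'2 : n' ≥ delta Eb := by simpa [delta] using hn'
          obtain ⟨hE2, hnn⟩ := ih2 Eb n n' hn2 hn'2 h2
          exact ⟨by rw [hE1, hE2], hnn⟩

/-- (λ.A[V]) M is not a redex -/
lemma ans_app_not_redex {A : ACtx} {V M X : Tm} (hV : IsVal V) (hR : IsRedex X)
    (hX : X = Tm.app (Tm.lam (plugA A V)) M) : False := by
  cases hR with
  | deref E n V' hv hd =>
      obtain ⟨h1, -⟩ := Tm.app.inj hX
      exact ans_ne_var hV E A n (Tm.lam.inj h1).symm
  | assocL A' V' Ma Na hv =>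
      obtain ⟨h1, -⟩ := Tm.app.inj hX
      cases h1
  | assocR E n A' V' Ma hv hd =>
      obtain ⟨h1, -⟩ := Tm.app.inj hX
      exact ans_ne_var hV E A n (Tm.lam.inj h1).symm

/-- an answer never equals a redex decomposition -/
lemma ans_ne_redex {V : Tm} (hV : IsVal V) :
    ∀ (A : ACtx) (E : ECtx) (M : Tm), IsRedex M → plugA A V ≠ plugE E M := by
  intro A
  induction A with
  | hole =>
      intro E M hM h
      obtain ⟨W, rfl⟩ := hV
      exact redex_ne_lam hM h.symm
  | bind A' N' ih =>
      intro E M hM h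
      cases E with
      | hole =>
          exact ans_app_not_redex (A := A') hV hM h.symm
      | appL Ea Na =>
          simp only [plugA, plugE] at h
          obtain ⟨h1, -⟩ := Tm.app.inj h
          exact redex_ne_lam hM h1.symm
      | bind Ea Na =>
          simp only [plugA, plugE] at h
          obtain ⟨h1, -⟩ := Tm.app.inj h
          exact ih Ea M hM (Tm.lam.inj h1)
      | opC Ea Eb =>
          simp only [plugA, plugE] at h
          obtain ⟨h1, -⟩ := Tm.app.inj h
          exact ans_ne_var hV Ea A' (delta Ea) (Tm.lam.inj h1)

/-- (λ.A[V]) M never equals a demanded-variable decomposition -/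
lemma ans_app_ne_var {A : ACtx} {V M : Tm} (hV : IsVal V) :
    ∀ (E : ECtx) (n : Nat), Tm.app (Tm.lam (plugA A V)) M ≠ plugE E (Tm.var n) := by
  intro E n h
  cases E with
  | hole => simp [plugE] at h
  | appL Ea Na =>
      simp only [plugE] at h
      obtain ⟨h1, -⟩ := Tm.app.inj h
      obtain ⟨-, h3⟩ := plug_eq_lam h1.symm
      cases h3
  | bind Ea Na =>
      simp only [plugE] at h
      obtain ⟨h1, -⟩ := Tm.app.inj h
      exact ans_ne_var hV Ea A n (Tm.lam.inj h1)
  | opC Ea Eb =>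
      simp only [plugE] at h
      obtain ⟨h1, -⟩ := Tm.app.inj h
      exact ans_ne_var hV Ea A (delta Ea) (Tm.lam.inj h1)

/-- a redex decomposition never equals a demanded-variable decomposition -/
lemma redex_ne_var {M : Tm} (hM : IsRedex M) :
    ∀ (E E' : ECtx) (n : Nat), n ≥ delta E' → plugE E M ≠ plugE E' (Tm.var n) := by
  intro E
  induction E with
  | hole =>
      intro E' n hn h
      simp only [plugE] at h
      cases hM with
      | deref Ed m Vd hv hd =>
          cases E' with
          | hole => simp [plugE] at h
          | appL Ea Na =>
              simp only [plugE] at h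
              obtain ⟨h1, -⟩ := Tm.app.inj h
              obtain ⟨-, h3⟩ := plug_eq_lam h1.symm
              cases h3
          | bind Ea Na =>
              simp only [plugE] at h
              obtain ⟨h1, h2⟩ := Tm.app.inj h
              have hm : m ≥ delta Ed := le_of_eq hd
              have hn2 : n ≥ delta Ea := by simp [delta] at hn; omega
              obtain ⟨hE, hmn⟩ := var_decomp_unique Ed Ea m n hm hn2 (Tm.lam.inj h1)
              subst hE
              simp [delta] at hn
              omega
          | opC Ea Eb =>
              simp only [plugE] at h
              obtain ⟨-, h2⟩ := Tm.app.inj h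
              obtain ⟨W, rfl⟩ := hv
              obtain ⟨-, h3⟩ := plug_eq_lam h2.symm
              cases h3
      | assocL A V Ma Na hv =>
          cases E' with
          | hole => simp [plugE] at h
          | appL Ea Na' =>
              simp only [plugE] at h
              obtain ⟨h1, -⟩ := Tm.app.inj h
              exact ans_app_ne_var hv Ea n h1
          | bind Ea Na' =>
              simp only [plugE] at h
              obtain ⟨h1, -⟩ := Tm.app.inj h
              cases h1
          | opC Ea Eb =>
              simp only [plugE] at h
              obtain ⟨h1, -⟩ := Tm.app.inj h
              cases h1
      | assocR Ed m A V Ma hv hd =>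
          cases E' with
          | hole => simp [plugE] at h
          | appL Ea Na =>
              simp only [plugE] at h
              obtain ⟨h1, -⟩ := Tm.app.inj h
              obtain ⟨-, h3⟩ := plug_eq_lam h1.symm
              cases h3
          | bind Ea Na =>
              simp only [plugE] at h
              obtain ⟨h1, -⟩ := Tm.app.inj h
              have hm : m ≥ delta Ed := le_of_eq hd
              have hn2 : n ≥ delta Ea := by simp [delta] at hn; omega
              obtain ⟨hE, hmn⟩ := var_decomp_unique Ed Ea m n hm hn2 (Tm.lam.inj h1)
              subst hE
              simp [delta] at hn
              omega
          | opC Ea Eb =>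
              simp only [plugE] at h
              obtain ⟨-, h2⟩ := Tm.app.inj h
              exact ans_app_ne_var hv Eb n h2
  | appL E N ih =>
      intro E' n hn h
      cases E' with
      | hole =>
          simp only [plugE] at h
          obtain ⟨P, Q, hPQ⟩ := redex_app hM
          rw [hPQ] at h; cases h
      | appL Ea Na =>
          simp only [plugE] at h
          obtain ⟨h1, -⟩ := Tm.app.inj h
          exact ih Ea n hn h1
      | bind Ea Na =>
          simp only [plugE] at h
          obtain ⟨h1, -⟩ := Tm.app.inj h
          exact redex_ne_lam hM h1
      | opC Ea Eb =>
          simp only [plugE] at h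
          obtain ⟨h1, -⟩ := Tm.app.inj h
          exact redex_ne_lam hM h1
  | bind E N ih =>
      intro E' n hn h
      cases E' with
      | hole =>
          simp only [plugE] at h
          obtain ⟨P, Q, hPQ⟩ := redex_app hM
          rw [hPQ] at h; cases h
      | appL Ea Na =>
          simp only [plugE] at h
          obtain ⟨h1, -⟩ := Tm.app.inj h
          obtain ⟨-, h3⟩ := plug_eq_lam h1.symm
          cases h3
      | bind Ea Na =>
          simp only [plugE] at h
          obtain ⟨h1, -⟩ := Tm.app.inj h
          have hn2 : n ≥ delta Ea := by simp [delta] at hn; omega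
          exact ih Ea n hn2 (Tm.lam.inj h1)
      | opC Ea Eb =>
          simp only [plugE] at h
          obtain ⟨h1, -⟩ := Tm.app.inj h
          exact ih Ea (delta Ea) (le_refl _) (Tm.lam.inj h1)
  | opC E1 E2 ih1 ih2 =>
      intro E' n hn h
      cases E' with
      | hole =>
          simp only [plugE] at h
          obtain ⟨P, Q, hPQ⟩ := redex_app hM
          rw [hPQ] at h; cases h
      | appL Ea Na =>
          simp only [plugE] at h
          obtain ⟨h1, -⟩ := Tm.app.inj h
          obtain ⟨-, h3⟩ := plug_eq_lam h1.symm
          cases h3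
      | bind Ea Na =>
          simp only [plugE] at h
          obtain ⟨h1, -⟩ := Tm.app.inj h
          have hn2 : n ≥ delta Ea := by simp [delta] at hn; omega
          obtain ⟨hE, hmn⟩ :=
            var_decomp_unique E1 Ea (delta E1) n (le_refl _) hn2 (Tm.lam.inj h1)
          subst hE
          simp [delta] at hn
          omega
      | opC Ea Eb =>
          simp only [plugE] at h
          obtain ⟨-, h2⟩ := Tm.app.inj h
          have hn2 : n ≥ delta Eb := by simpa [delta] using hn
          exact ih2 Eb n hn2 h2

/-- a redex decomposition never equals a (λ.A[V]) M term -/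
lemma redex_ne_ans_app {E : ECtx} {M : Tm} (hM : IsRedex M) {A : ACtx} {V N : Tm}
    (hV : IsVal V) : plugE E M ≠ Tm.app (Tm.lam (plugA A V)) N := by
  intro h
  cases E with
  | hole => exact ans_app_not_redex hV hM h
  | appL Ea Na =>
      simp only [plugE] at h
      obtain ⟨h1, -⟩ := Tm.app.inj h
      exact redex_ne_lam hM h1
  | bind Ea Na =>
      simp only [plugE] at h
      obtain ⟨h1, -⟩ := Tm.app.inj h
      exact ans_ne_redex hV A Ea M hM (Tm.lam.inj h1).symm
  | opC Ea Eb =>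
      simp only [plugE] at h
      obtain ⟨h1, -⟩ := Tm.app.inj h
      exact ans_ne_var hV Ea A (delta Ea) (Tm.lam.inj h1).symm

/-- a redex plugged in a non-hole context never equals a bare redex -/
lemma plug_eq_redex {E2 : ECtx} {M1 M2 : Tm} (hM1 : IsRedex M1) (hM2 : IsRedex M2)
    (h : plugE E2 M2 = M1) : E2 = ECtx.hole ∧ M2 = M1 := by
  cases E2 with
  | hole => exact ⟨rfl, h⟩
  | appL Eb N =>
      exfalso
      simp only [plugE] at h
      cases hM1 with
      | deref E n V hv hd =>
          obtain ⟨h1, -⟩ := Tm.app.inj h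
          exact redex_ne_lam hM2 h1
      | assocL A V Ma Na hv =>
          obtain ⟨h1, -⟩ := Tm.app.inj h
          exact redex_ne_ans_app hM2 hv h1
      | assocR E n A V Ma hv hd =>
          obtain ⟨h1, -⟩ := Tm.app.inj h
          exact redex_ne_lam hM2 h1
  | bind Eb N =>
      exfalso
      simp only [plugE] at h
      cases hM1 with
      | deref E n V hv hd =>
          obtain ⟨h1, -⟩ := Tm.app.inj h
          exact redex_ne_var hM2 Eb E n (le_of_eq hd) (Tm.lam.inj h1)
      | assocL A V Ma Na hv =>
          obtain ⟨h1, -⟩ := Tm.app.inj h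
          cases h1
      | assocR E n A V Ma hv hd =>
          obtain ⟨h1, -⟩ := Tm.app.inj h
          exact redex_ne_var hM2 Eb E n (le_of_eq hd) (Tm.lam.inj h1)
  | opC Eb Ec =>
      exfalso
      simp only [plugE] at h
      cases hM1 with
      | deref E n V hv hd =>
          obtain ⟨-, h2⟩ := Tm.app.inj h
          exact redex_ne_lam hM2 (X := Classical.choose hv) (by
            rw [h2]; exact Classical.choose_spec hv)
      | assocL A V Ma Na hv =>
          obtain ⟨h1, -⟩ := Tm.app.inj h
          cases h1
      | assocR E n A V Ma hv hd =>
          obtain ⟨-, h2⟩ := Tm.app.inj h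
          exact redex_ne_ans_app hM2 hv h2

theorem unique_decomposition_deterministic :
    ∀ (E1 E2 : ECtx) (M1 M2 : Tm),
      IsRedex M1 → IsRedex M2 → plugE E1 M1 = plugE E2 M2 →
      E1 = E2 ∧ M1 = M2 := by
  intro E1
  induction E1 with
  | hole =>
      intro E2 M1 M2 h1 h2 h
      obtain ⟨hE, hM⟩ := plug_eq_redex h1 h2 h.symm
      exact ⟨hE.symm, hM.symm⟩
  | appL Ea N ih =>
      intro E2 M1 M2 h1 h2 h
      cases E2 with
      | hole =>
          obtain ⟨hE, -⟩ := plug_eq_redex h2 h1 h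
          cases hE
      | appL Ea' N' =>
          simp only [plugE] at h
          obtain ⟨ha, hb⟩ := Tm.app.inj h
          obtain ⟨hE, hM⟩ := ih Ea' M1 M2 h1 h2 ha
          exact ⟨by rw [hE, hb], hM⟩
      | bind Ea' N' =>
          exfalso
          simp only [plugE] at h
          obtain ⟨ha, -⟩ := Tm.app.inj h
          exact redex_ne_lam h1 ha
      | opC Eb' Ec' =>
          exfalso
          simp only [plugE] at h
          obtain ⟨ha, -⟩ := Tm.app.inj h
          exact redex_ne_lam h1 ha
  | bind Ea N ih =>
      intro E2 M1 M2 h1 h2 h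
      cases E2 with
      | hole =>
          obtain ⟨hE, -⟩ := plug_eq_redex h2 h1 h
          cases hE
      | appL Ea' N' =>
          exfalso
          simp only [plugE] at h
          obtain ⟨ha, -⟩ := Tm.app.inj h
          exact redex_ne_lam h2 ha.symm
      | bind Ea' N' =>
          simp only [plugE] at h
          obtain ⟨ha, hb⟩ := Tm.app.inj h
          obtain ⟨hE, hM⟩ := ih Ea' M1 M2 h1 h2 (Tm.lam.inj ha)
          exact ⟨by rw [hE, hb], hM⟩
      | opC Eb' Ec' =>
          exfalso
          simp only [plugE] at h
          obtain ⟨ha, -⟩ := Tm.app.inj h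
          exact redex_ne_var h1 Ea Eb' (delta Eb') (le_refl _) (Tm.lam.inj ha)
  | opC Eb Ec ihb ihc =>
      intro E2 M1 M2 h1 h2 h
      cases E2 with
      | hole =>
          obtain ⟨hE, -⟩ := plug_eq_redex h2 h1 h
          cases hE
      | appL Ea' N' =>
          exfalso
          simp only [plugE] at h
          obtain ⟨ha, -⟩ := Tm.app.inj h
          exact redex_ne_lam h2 ha.symm
      | bind Ea' N' =>
          exfalso
          simp only [plugE] at h
          obtain ⟨ha, -⟩ := Tm.app.inj h
          exact redex_ne_var h2 Ea' Eb (delta Eb) (le_refl _) (Tm.lam.inj ha).symm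
      | opC Eb' Ec' =>
          simp only [plugE] at h
          obtain ⟨ha, hb⟩ := Tm.app.inj h
          obtain ⟨hEb, -⟩ :=
            var_decomp_unique Eb Eb' (delta Eb) (delta Eb') (le_refl _) (le_refl _)
              (Tm.lam.inj ha)
          obtain ⟨hEc, hM⟩ := ihc Ec' M1 M2 h1 h2 hb
          exact ⟨by rw [hEb, hEc], hM⟩
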